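/- For π ∈ S_n, inv(π) = min_{0 ≤ i < n} inv(π·c_n^i) if and only if π is 'heavy tailed', i.e., for every 1 ≤ k ≤ n, the prefix sum Σ_{j=1}^k π(j) ≤ k(n+1)/2. -/

import Mathlib

open Finset

def inversions {n : ℕ} (π : Equiv.Perm (Fin n)) : ℕ :=
  (Finset.univ.filter (fun p : Fin n × Fin n => p.1 < p.2 ∧ π p.2 < π p.1)).card

def winv {n : ℕ} (π : Equiv.Perm (Fin n)) : ℤ :=
  ∑ p ∈ Finset.univ.filter (fun p : Fin n × Fin n => p.1 < p.2 ∧ π p.2 < π p.1),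
    ((π p.1 : ℤ) - (π p.2 : ℤ))

def cwinv {n : ℕ} (π : Equiv.Perm (Fin n)) : ℤ :=
  n * inversions π - 2 * winv π

/-!
Rotating by `c = finRotate n` moves the first letter `σ 0` of the word `σ` to its end: the
`σ 0` inversions it formed with smaller letters disappear and the `n - 1 - σ 0` pairs with
larger letters become inversions, so `inv (σ * c) = inv σ + n - 1 - 2 σ 0`. Iterating,
`inv (π * c ^ k) = inv π + k (n + 1) - 2 ∑_{j < k} (π j + 1)` for `k ≤ n`, so
`inv π ≤ inv (π * c ^ k)` is exactly the heavy-tail inequality at `k`; at `k = n` both hold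
because `c ^ n = 1`.
-/

open Fin.NatCast

lemma inversions_mul_eq_card {n : ℕ} (σ τ : Equiv.Perm (Fin n)) :
    inversions (σ * τ) = #{p : Fin n × Fin n | τ.symm p.1 < τ.symm p.2 ∧ σ p.2 < σ p.1} := by
  rw [inversions]
  exact card_equiv (τ.prodCongr τ) fun p => by
    simp only [mem_filter, mem_univ, true_and]
    simp

lemma finRotate_symm_zero (n : ℕ) : (finRotate (n + 1)).symm 0 = Fin.last n :=
  (finRotate (n + 1)).symm_apply_eq.2 finRotate_last.symm

lemma finRotate_symm_lt_finRotate_symm_iff {n : ℕ} {x y : Fin (n + 1)} :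
    (finRotate (n + 1)).symm x < (finRotate (n + 1)).symm y ↔ x ≠ 0 ∧ (x < y ∨ y = 0) := by
  rcases eq_or_ne x 0 with rfl | hx
  · rw [finRotate_symm_zero]
    simpa using Fin.le_last _
  rcases eq_or_ne y 0 with rfl | hy
  · rw [finRotate_symm_zero, Fin.lt_last_iff_ne_last, Ne, Equiv.symm_apply_eq, finRotate_last]
    simp [hx]
  · have h0 : 0 < (x : ℕ) := Fin.pos_iff_ne_zero.2 hx
    rw [Fin.lt_def, coe_finRotate_symm_of_ne_zero hx, coe_finRotate_symm_of_ne_zero hy]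
    simp only [ne_eq, hx, not_false_eq_true, hy, or_false, true_and, Fin.lt_def]
    omega

lemma card_filter_apply_lt {n : ℕ} (σ : Equiv.Perm (Fin n)) (v : Fin n) : #{x | σ x < v} = v := by
  rw [← Fin.card_Iio v]
  exact card_equiv σ fun x => by simp

lemma card_filter_lt_apply {n : ℕ} (σ : Equiv.Perm (Fin n)) (v : Fin n) :
    #{x | v < σ x} = n - 1 - v := by
  rw [← Fin.card_Ioi v]
  exact card_equiv σ fun x => by simp

lemma card_filter_snd_eq_and {α : Type*} [Fintype α] [DecidableEq α] (a : α) (q : α → Prop)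
    [DecidablePred q] : #{p : α × α | p.2 = a ∧ q p.1} = #{x | q x} :=
  card_nbij' Prod.fst (fun x => (x, a)) (by intro p; simp) (by intro x; simp)
    (by rintro ⟨x, y⟩; simp +contextual) (by intro x; simp)

lemma card_filter_fst_eq_and {α : Type*} [Fintype α] [DecidableEq α] (a : α) (q : α → Prop)
    [DecidablePred q] : #{p : α × α | p.1 = a ∧ q p.2} = #{y | q y} :=
  card_nbij' Prod.snd (fun y => (a, y)) (by intro p; simp) (by intro y; simp)
    (by rintro ⟨x, y⟩; simp +contextual) (by intro y; simp)

lemma inversions_mul_finRotate_add {n : ℕ} (σ : Equiv.Perm (Fin (n + 1))) :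
    inversions (σ * finRotate (n + 1)) + 2 * σ 0 = inversions σ + n := by
  -- pairs of positions not involving position 0 are inversions of `σ` and of `σ * c` alike
  set A := #{p : Fin (n + 1) × Fin (n + 1) | p.1 ≠ 0 ∧ p.1 < p.2 ∧ σ p.2 < σ p.1}
  have h_rot : inversions (σ * finRotate (n + 1)) = A + #{x | σ 0 < σ x} := by
    rw [inversions_mul_eq_card, ← card_filter_snd_eq_and 0 (fun x => σ 0 < σ x), ← card_union_of_disjoint]
    · congr 1
      ext ⟨x, y⟩
      simp only [mem_filter, mem_union, mem_univ, true_and, finRotate_symm_lt_finRotate_symm_iff]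
      grind
    · rw [disjoint_filter]
      rintro ⟨x, y⟩ - ⟨-, hxy, -⟩ ⟨rfl, -⟩
      exact Fin.not_lt_zero x hxy
  have h_id : inversions σ = A + #{y | σ y < σ 0} := by
    rw [inversions, ← card_filter_fst_eq_and 0 (fun y => σ y < σ 0), ← card_union_of_disjoint]
    · congr 1
      ext ⟨x, y⟩
      simp only [mem_filter, mem_union, mem_univ, true_and]
      grind
    · rw [disjoint_filter]
      rintro ⟨x, y⟩ - ⟨hx, -⟩ ⟨rfl, -⟩
      exact hx rfl
  have hbound : (σ 0 : ℕ) ≤ n := Fin.is_le _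
  rw [h_rot, h_id, card_filter_apply_lt, card_filter_lt_apply]
  omega

lemma finRotate_pow_apply {n : ℕ} [NeZero n] (k : ℕ) (x : Fin n) :
    (finRotate n ^ k) x = x + k := by
  induction k with
  | zero => simp
  | succ k ih =>
    rw [pow_succ', Equiv.Perm.mul_apply, ih, finRotate_apply, Nat.cast_succ, add_assoc]

lemma finRotate_pow_self (n : ℕ) : finRotate n ^ n = 1 := by
  rcases n.eq_zero_or_pos with rfl | hn
  · rfl
  · have : NeZero n := ⟨hn.ne'⟩
    ext x
    simp [finRotate_pow_apply]

lemma sum_filter_val_lt_succ {M : Type*} [AddCommMonoid M] {n : ℕ} [NeZero n] (f : Fin n → M)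
    {k : ℕ} (hk : k < n) :
    ∑ j ∈ univ.filter (fun j : Fin n => (j : ℕ) < k + 1), f j =
      ∑ j ∈ univ.filter (fun j : Fin n => (j : ℕ) < k), f j + f k := by
  have hval : ((k : Fin n) : ℕ) = k := Fin.val_cast_of_lt hk
  have hset : univ.filter (fun j : Fin n => (j : ℕ) < k + 1) =
      insert (k : Fin n) (univ.filter fun j : Fin n => (j : ℕ) < k) := by
    ext j
    simp only [mem_filter, mem_univ, true_and, mem_insert, Fin.ext_iff, hval]
    omega
  rw [hset, sum_insert (by simp [hval]), add_comm]

lemma inversions_mul_finRotate_pow_add {n : ℕ} (π : Equiv.Perm (Fin n)) {k : ℕ} (hk : k ≤ n) :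
    inversions (π * finRotate n ^ k) +
        2 * ∑ j ∈ univ.filter (fun j : Fin n => (j : ℕ) < k), ((π j : ℕ) + 1) =
      inversions π + k * (n + 1) := by
  induction k with
  | zero => simp
  | succ k ih =>
    obtain ⟨m, rfl⟩ : ∃ m, n = m + 1 := ⟨n - 1, by omega⟩
    have hstep := inversions_mul_finRotate_add (π * finRotate (m + 1) ^ k)
    rw [Equiv.Perm.mul_apply, finRotate_pow_apply, zero_add, mul_assoc, ← pow_succ] at hstep
    have hprev := ih (by omega)
    rw [sum_filter_val_lt_succ _ hk, add_mul, one_mul]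
    omega

lemma inversions_le_mul_finRotate_pow_iff {n : ℕ} (π : Equiv.Perm (Fin n)) {k : ℕ} (hk : k ≤ n) :
    inversions π ≤ inversions (π * finRotate n ^ k) ↔
      2 * ∑ j ∈ univ.filter (fun j : Fin n => (j : ℕ) < k), ((π j : ℕ) + 1) ≤ k * (n + 1) := by
  have := inversions_mul_finRotate_pow_add π hk
  omega

theorem inv_eq_min_iff_heavy_tailed {n : ℕ} (π : Equiv.Perm (Fin n)) :
    (∀ i, i < n → inversions π ≤ inversions (π * (finRotate n) ^ i)) ↔
    (∀ k, 1 ≤ k → k ≤ n →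
      2 * ∑ j ∈ Finset.univ.filter (fun j : Fin n => (j : ℕ) < k), ((π j : ℕ) + 1)
        ≤ k * (n + 1)) := by
  constructor
  · intro h k _ hkn
    rw [← inversions_le_mul_finRotate_pow_iff π hkn]
    rcases hkn.lt_or_eq with hk | rfl
    · exact h k hk
    · rw [finRotate_pow_self, mul_one]
  · intro h i hi
    rcases i.eq_zero_or_pos with rfl | hi0
    · rw [pow_zero, mul_one]
    · exact (inversions_le_mul_finRotate_pow_iff π hi.le).2 (h i hi0 hi.le)
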